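/- Let N be a finite set of points in ℝ^m and let S ⊆ N be a subset of maximal cardinality such that no m+1 distinct points of S lie in a common affine hyperplane (i.e. D(v_1,…,v_{m+1}) > 0 for all pairwise-distinct v_1,…,v_{m+1} ∈ S). Let K be the maximal number of points of N contained in a single affine hyperplane. Then #N ≤ K · max(1, C(#S, m)), where C(·,·) is the binomial coefficient. -/

import Mathlib

/-- `D(v₁,…,v_{m+1})`: absolute value of the determinant of the matrix with a
first row of 1's and the points as the remaining rows' columns. -/
noncomputable def letendreD (m : ℕ) (v : Fin (m + 1) → (Fin m → ℝ)) : ℝ :=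
  |(Matrix.of (Fin.cons (fun _ => (1 : ℝ)) (fun i j => v j i))).det|

/-- A finite set of points is in general position if no `m+1` distinct points of it
lie in a common affine hyperplane. -/
def GeneralPosition (m : ℕ) (S : Finset (Fin m → ℝ)) : Prop :=
  ∀ v : Fin (m + 1) → (Fin m → ℝ),
    (∀ i, v i ∈ S) → Function.Injective v → 0 < letendreD m v

/-! Lift each point `x` to homogeneous coordinates `(1, x) ∈ ℝ^{m+1}`. Then `D(v) > 0` exactly when
the lifts of the `v i` are linearly independent, and every proper subspace of `ℝ^{m+1}` is contained
in the kernel of a nonzero functional, i.e. its points of the form `(1, x)` lie on an affine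
hyperplane.

If `#S ≤ m`, maximality of `S` bounds the rank of the lifts of `N` by `m`, so all of `N` lies on one
hyperplane. Otherwise, for `x ∈ N \ S` the set `S ∪ {x}` is not in general position; a dependent
`(m+1)`-subset must contain `x`, and its other `m` points form a subset `T ⊆ S` with independent
lifts, so `(1, x)` lies in the span of the lifts of `T`. Points of `S` lie in such spans trivially.
Hence the `C(#S, m)` spans of lifts of `m`-subsets of `S` cover `N`, and each sits in a hyperplane
holding at most `K` points. -/

open Module Submodule Finset

section
variable {m : ℕ}

def toHomogeneous (x : Fin m → ℝ) : Fin (m + 1) → ℝ := Fin.cons 1 x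

lemma toHomogeneous_injective : Function.Injective (toHomogeneous (m := m)) :=
  Fin.cons_right_injective (α := fun _ => ℝ) 1

lemma letendreD_eq_abs_det (v : Fin (m + 1) → Fin m → ℝ) :
    letendreD m v = |(Matrix.of fun j => toHomogeneous (v j)).det| := by
  rw [letendreD, ← Matrix.det_transpose]
  congr 2
  ext i j
  refine Fin.cases ?_ (fun j => ?_) j <;> rfl

lemma letendreD_pos_iff (v : Fin (m + 1) → Fin m → ℝ) :
    0 < letendreD m v ↔ LinearIndependent ℝ (toHomogeneous ∘ v) := by
  rw [letendreD_eq_abs_det, abs_pos, ← isUnit_iff_ne_zero, ← Matrix.isUnit_iff_isUnit_det,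
    ← Matrix.linearIndependent_rows_iff_isUnit]
  rfl

lemma finrank_span_toHomogeneous_le_card (T : Finset (Fin m → ℝ)) :
    finrank ℝ (span ℝ (toHomogeneous '' (T : Set (Fin m → ℝ)))) ≤ T.card := by
  classical
  rw [← coe_image]
  exact (finrank_span_finset_le_card _).trans card_image_le

lemma map_toHomogeneous (f : (Fin (m + 1) → ℝ) →ₗ[ℝ] ℝ) (x : Fin m → ℝ) :
    f (toHomogeneous x) = f (Pi.single 0 1) + ∑ i, f (Pi.single i.succ 1) * x i := by
  conv_lhs => rw [← univ_sum_single (toHomogeneous x)]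
  simp only [Fin.sum_univ_succ, toHomogeneous, Fin.cons_zero, Fin.cons_succ, map_add, map_sum]
  congr 1
  refine sum_congr rfl fun i _ => ?_
  rw [mul_comm, ← smul_eq_mul, ← map_smul, ← Pi.single_smul', smul_eq_mul, mul_one]

lemma exists_hyperplane_of_finrank_le (hm : 1 ≤ m) {P : Submodule ℝ (Fin (m + 1) → ℝ)}
    (hP : finrank ℝ P ≤ m) :
    ∃ w : Fin m → ℝ, w ≠ 0 ∧ ∃ c : ℝ, ∀ x, toHomogeneous x ∈ P → ∑ i, w i * x i = c := by
  have hPtop : P < ⊤ := lt_top_iff_ne_top.2 fun h => by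
    rw [h, finrank_top, finrank_fin_fun] at hP; omega
  obtain ⟨f, hf, hPf⟩ := P.exists_le_ker_of_lt_top hPtop
  set w : Fin m → ℝ := fun i => f (Pi.single i.succ 1)
  have hfx : ∀ x, f (toHomogeneous x) = f (Pi.single 0 1) + ∑ i, w i * x i :=
    map_toHomogeneous f
  by_cases hw : w = 0
  · -- then `f (1, x) = f (1, 0) ≠ 0`, so no point of the form `(1, x)` lies in `P`
    have h0 : f (Pi.single 0 1) ≠ 0 := by
      intro h0
      refine hf ((Pi.basisFun ℝ _).ext fun i => Fin.cases ?_ (fun i => ?_) i)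
      · simpa using h0
      · simpa using congrFun hw i
    refine ⟨fun _ => 1, fun h => one_ne_zero (congrFun h ⟨0, hm⟩), 0, fun x hx => absurd ?_ h0⟩
    simpa [hfx, hw] using hPf hx
  · exact ⟨w, hw, -f (Pi.single 0 1), fun x hx => by
      have := hPf hx
      rw [LinearMap.mem_ker, hfx] at this
      linarith⟩

lemma generalPosition_iff {S : Finset (Fin m → ℝ)} :
    GeneralPosition m S ↔
      ∀ U ⊆ S, U.card = m + 1 → LinearIndepOn ℝ toHomogeneous (U : Set (Fin m → ℝ)) := by
  constructor
  · intro hS U hUS hU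
    set v : Fin (m + 1) → Fin m → ℝ := (↑) ∘ (U.equivFinOfCardEq hU).symm
    have hv : Function.Injective v := Subtype.val_injective.comp (Equiv.injective _)
    have hrange : Set.range v = U := by simp [v, Set.range_comp]
    rw [← hrange, linearIndepOn_range_iff hv, ← letendreD_pos_iff]
    exact hS v (fun i => hUS ((U.equivFinOfCardEq hU).symm i).2) hv
  · intro h v hvS hv
    rw [letendreD_pos_iff, ← linearIndepOn_range_iff hv]
    simpa using h (univ.image v) (by simpa [Finset.subset_iff] using hvS)
      (by rw [card_image_of_injective _ hv, card_univ, Fintype.card_fin])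

lemma GeneralPosition.linearIndepOn {S U : Finset (Fin m → ℝ)} (hS : GeneralPosition m S)
    (hUS : U ⊆ S) (hU : U.card ≤ m + 1) (hS' : m + 1 ≤ S.card) :
    LinearIndepOn ℝ toHomogeneous (U : Set (Fin m → ℝ)) := by
  obtain ⟨V, hUV, hVS, hV⟩ := exists_subsuperset_card_eq hUS hU hS'
  exact (generalPosition_iff.mp hS V hVS hV).mono (coe_subset.mpr hUV)

lemma generalPosition_of_linearIndepOn {T : Finset (Fin m → ℝ)}
    (hT : LinearIndepOn ℝ toHomogeneous (T : Set (Fin m → ℝ))) : GeneralPosition m T :=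
  generalPosition_iff.mpr fun _ hU _ => hT.mono (coe_subset.mpr hU)

lemma exists_generalPosition_card_eq_finrank (N : Finset (Fin m → ℝ)) :
    ∃ T ⊆ N, GeneralPosition m T ∧
      T.card = finrank ℝ (span ℝ (toHomogeneous '' (N : Set (Fin m → ℝ)))) := by
  classical
  obtain ⟨b, hbN, hspan, hb⟩ :=
    exists_linearIndependent ℝ (toHomogeneous '' (N : Set (Fin m → ℝ)))
  set T := N.filter (toHomogeneous · ∈ b)
  have hTb : ((T.image toHomogeneous : Finset _) : Set (Fin (m + 1) → ℝ)) = b := by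
    ext y
    simp only [coe_image, coe_filter, Set.mem_image, T]
    constructor
    · rintro ⟨x, ⟨-, hx⟩, rfl⟩
      exact hx
    · intro hy
      obtain ⟨x, hx, rfl⟩ := hbN hy
      exact ⟨x, ⟨hx, hy⟩, rfl⟩
  have hT : LinearIndepOn ℝ id ((T.image toHomogeneous : Finset _) : Set (Fin (m + 1) → ℝ)) :=
    hTb ▸ hb
  refine ⟨T, filter_subset _ _, generalPosition_of_linearIndepOn ?_, ?_⟩
  · rwa [linearIndepOn_iff_image toHomogeneous_injective.injOn, ← coe_image]
  · rw [← hspan, ← hTb, finrank_span_finset_eq_card hT,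
      card_image_of_injective _ toHomogeneous_injective]

lemma GeneralPosition.exists_mem_span_of_maximal (hm : 1 ≤ m) {N S : Finset (Fin m → ℝ)}
    (hSN : S ⊆ N) (hS : GeneralPosition m S)
    (hmax : ∀ T ⊆ N, GeneralPosition m T → T.card ≤ S.card) (hcard : m + 1 ≤ S.card)
    {x : Fin m → ℝ} (hx : x ∈ N) :
    ∃ T ∈ S.powersetCard m, toHomogeneous x ∈ span ℝ (toHomogeneous '' (T : Set _)) := by
  by_cases hxS : x ∈ S
  · obtain ⟨T, hxT, hTS, hT⟩ :=
      exists_subsuperset_card_eq (singleton_subset_iff.mpr hxS) (by simpa using hm) (by omega)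
    exact ⟨T, mem_powersetCard.mpr ⟨hTS, hT⟩,
      subset_span ⟨x, singleton_subset_iff.mp hxT, rfl⟩⟩
  have hinsert : ¬ GeneralPosition m (insert x S) := fun h => by
    have := hmax _ (insert_subset hx hSN) h
    rw [card_insert_of_notMem hxS] at this
    omega
  obtain ⟨U, hUxS, hU, hUdep⟩ : ∃ U ⊆ insert x S, U.card = m + 1 ∧
      ¬ LinearIndepOn ℝ toHomogeneous (U : Set (Fin m → ℝ)) := by
    simpa [generalPosition_iff] using hinsert
  have hTS : U.erase x ⊆ S := subset_insert_iff.mp hUxS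
  have hxU : x ∈ U := by
    by_contra hxU
    rw [erase_eq_of_notMem hxU] at hTS
    exact hUdep (hS.linearIndepOn hTS hU.le hcard)
  have hT : (U.erase x).card = m := by
    rw [card_erase_of_mem hxU, hU, Nat.add_sub_cancel]
  refine ⟨U.erase x, mem_powersetCard.mpr ⟨hTS, hT⟩, ?_⟩
  rw [← insert_erase hxU, coe_insert, linearIndepOn_insert (notMem_erase x U)] at hUdep
  by_contra hspan
  exact hUdep ⟨hS.linearIndepOn hTS (by omega) hcard, hspan⟩

end

theorem card_le_of_general_position (m : ℕ) (hm : 1 ≤ m)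
    (N S : Finset (Fin m → ℝ)) (hSN : S ⊆ N)
    (hS : GeneralPosition m S)
    (hmax : ∀ T ⊆ N, GeneralPosition m T → T.card ≤ S.card)
    (K : ℕ)
    (hK : ∀ (w : Fin m → ℝ) (c : ℝ), w ≠ 0 →
        (N.filter (fun x => ∑ i, w i * x i = c)).card ≤ K) :
    N.card ≤ K * max 1 (S.card.choose m) := by
  rcases le_or_gt S.card m with hSm | hSm
  · have hN : finrank ℝ (span ℝ (toHomogeneous '' (N : Set (Fin m → ℝ)))) ≤ m := by
      obtain ⟨T, hTN, hT, hcard⟩ := exists_generalPosition_card_eq_finrank N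
      exact hcard ▸ (hmax T hTN hT).trans hSm
    obtain ⟨w, hw, c, hc⟩ := exists_hyperplane_of_finrank_le hm hN
    calc N.card = (N.filter fun x => ∑ i, w i * x i = c).card := by
          rw [filter_true_of_mem fun x hx => hc x (subset_span (Set.mem_image_of_mem _ hx))]
      _ ≤ K := hK w c hw
      _ ≤ K * max 1 (S.card.choose m) := Nat.le_mul_of_pos_right _ (by positivity)
  · choose! w hw c hc using fun (T : Finset (Fin m → ℝ)) (hT : T.card = m) =>
      exists_hyperplane_of_finrank_le hm (hT ▸ finrank_span_toHomogeneous_le_card T)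
    have hcover :
        N ⊆ (S.powersetCard m).biUnion fun T => N.filter fun x => ∑ i, w T i * x i = c T := by
      intro x hx
      obtain ⟨T, hT, hxT⟩ := hS.exists_mem_span_of_maximal hm hSN hmax hSm hx
      exact mem_biUnion.mpr ⟨T, hT, mem_filter.mpr ⟨hx, hc T (mem_powersetCard.mp hT).2 x hxT⟩⟩
    calc N.card ≤ _ := card_le_card hcover
      _ ≤ (S.powersetCard m).card * K := card_biUnion_le_card_mul _ _ _ fun T hT =>
          hK _ _ (hw T (mem_powersetCard.mp hT).2)
      _ ≤ K * max 1 (S.card.choose m) := by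
          rw [card_powersetCard, mul_comm]
          exact Nat.mul_le_mul_left K (le_max_right _ _)
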